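/- Let 𝐌 be a multi-type mean-field MDP with W types, and define J_avg(𝛑̃;𝛑) := (1/W)·Σ_{w=1}^W J^w_𝐌(𝛑̃;𝛑), which equals the return in the lifted mean-field game of the constrained policy corresponding to 𝛑̃, conditioned on the one corresponding to 𝛑. Then: (1) if 𝛑̂ ∈ 𝚷 satisfies J_avg(𝛑;𝛑̂) ≤ J_avg(𝛑̂;𝛑̂) + ε for all 𝛑 ∈ 𝚷 (i.e., 𝛑̂ corresponds to an ε-approximate constrained Nash equilibrium of the lifted MFG), then 𝛑̂ is a (W·ε)-approximate Nash equilibrium of 𝐌, i.e., for all w and all 𝛑̃ ∈ 𝚷: J^w_𝐌(𝛑̃;𝛑̂) ≤ J^w_𝐌(𝛑̂;𝛑̂) + W·ε; and (2) conversely, if 𝛑̂ is an ε-approximate Nash equilibrium of 𝐌 (for all w, 𝛑̃: J^w_𝐌(𝛑̃;𝛑̂) ≤ J^w_𝐌(𝛑̂;𝛑̂) + ε), then J_avg(𝛑;𝛑̂) ≤ J_avg(𝛑̂;𝛑̂) + ε for all 𝛑 ∈ 𝚷. -/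
import Mathlib


/-- A multi-type policy: for each type `w`, step `h` and state `s`, a distribution over
the type-`w` actions. -/
def IsPolicyMT {W : ℕ} {S A : Fin W → Type*} [∀ w, Fintype (A w)]
    (π : ∀ w, ℕ → S w → A w → ℝ) : Prop :=
  ∀ w h s, (∀ a, 0 ≤ π w h s a) ∧ ∑ a, π w h s a = 1

/-- Multi-type kernels: for each type `w` and step `h < H`, a probability distribution on
`S w` given a tuple of densities, one per type. -/
def IsKernelMT {W : ℕ} {S A : Fin W → Type*} [∀ w, Fintype (S w)] (H : ℕ)
    (P : ∀ w, ℕ → S w → A w → (∀ w', S w' → ℝ) → S w → ℝ) : Prop :=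
  ∀ w h, h < H → ∀ s a (μ : ∀ w', S w' → ℝ),
    (∀ w', μ w' ∈ stdSimplex ℝ (S w')) → P w h s a μ ∈ stdSimplex ℝ (S w)

/-- Induced multi-type state densities: `densMT P μ₁ π h w = μ^{w,𝛑}_{𝐌,h+1}`. -/
def densMT {W : ℕ} {S A : Fin W → Type*} [∀ w, Fintype (S w)] [∀ w, Fintype (A w)]
    (P : ∀ w, ℕ → S w → A w → (∀ w', S w' → ℝ) → S w → ℝ)
    (μ₁ : ∀ w, S w → ℝ) (π : ∀ w, ℕ → S w → A w → ℝ) : ℕ → ∀ w, S w → ℝ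
  | 0 => μ₁
  | h + 1 => fun w s' =>
      ∑ s, ∑ a, densMT P μ₁ π h w s * π w h s a * P w h s a (densMT P μ₁ π h) s'

/-- State law of a type-`w` agent executing `π̃^w` while the type-`w` kernels are frozen at
the densities induced by the reference policy `π`. -/
def densWF {W : ℕ} {S A : Fin W → Type*} [∀ w, Fintype (S w)] [∀ w, Fintype (A w)]
    (P : ∀ w, ℕ → S w → A w → (∀ w', S w' → ℝ) → S w → ℝ)
    (μ₁ : ∀ w, S w → ℝ) (π πt : ∀ w, ℕ → S w → A w → ℝ) (w : Fin W) : ℕ → S w → ℝ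
  | 0 => μ₁ w
  | h + 1 => fun s' =>
      ∑ s, ∑ a, densWF P μ₁ π πt w h s * πt w h s a * P w h s a (densMT P μ₁ π h) s'

/-- `J^w_𝐌(π̃;π)`: expected total type-`w` reward of executing `π̃` while the type-`w`
transitions and rewards are frozen at the densities induced by `π`. -/
def JMT {W : ℕ} {S A : Fin W → Type*} [∀ w, Fintype (S w)] [∀ w, Fintype (A w)] (H : ℕ)
    (P : ∀ w, ℕ → S w → A w → (∀ w', S w' → ℝ) → S w → ℝ)
    (r : ∀ w, ℕ → S w → A w → (∀ w', S w' → ℝ) → ℝ)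
    (μ₁ : ∀ w, S w → ℝ) (πt π : ∀ w, ℕ → S w → A w → ℝ) (w : Fin W) : ℝ :=
  ∑ h ∈ Finset.range H, ∑ s, ∑ a,
    densWF P μ₁ π πt w h s * πt w h s a * r w h s a (densMT P μ₁ π h)

/-- ℓ1 distance between two tuples of densities: `Σ_w ‖μ^w − μ'^w‖₁`. -/
def l1MT {W : ℕ} {S : Fin W → Type*} [∀ w, Fintype (S w)] (μ μ' : ∀ w, S w → ℝ) : ℝ :=
  ∑ w, ∑ s, |μ w s - μ' w s|

lemma densWF_congr {W : ℕ} {S A : Fin W → Type*} [∀ w, Fintype (S w)] [∀ w, Fintype (A w)]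
    (P : ∀ w, ℕ → S w → A w → (∀ w', S w' → ℝ) → S w → ℝ)
    (μ₁ : ∀ w, S w → ℝ) (π πt πt' : ∀ w, ℕ → S w → A w → ℝ) (w : Fin W)
    (hw : πt w = πt' w) : ∀ h, densWF P μ₁ π πt w h = densWF P μ₁ π πt' w h := by
  intro h
  induction h with
  | zero => rfl
  | succ h ih => funext s'; simp only [densWF, ih, hw]

lemma JMT_congr {W : ℕ} {S A : Fin W → Type*} [∀ w, Fintype (S w)] [∀ w, Fintype (A w)] (H : ℕ)
    (P : ∀ w, ℕ → S w → A w → (∀ w', S w' → ℝ) → S w → ℝ)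
    (r : ∀ w, ℕ → S w → A w → (∀ w', S w' → ℝ) → ℝ)
    (μ₁ : ∀ w, S w → ℝ) (πt πt' π : ∀ w, ℕ → S w → A w → ℝ) (w : Fin W)
    (hw : πt w = πt' w) : JMT H P r μ₁ πt π w = JMT H P r μ₁ πt' π w := by
  unfold JMT
  refine Finset.sum_congr rfl fun h _ => ?_
  rw [densWF_congr P μ₁ π πt πt' w hw h, hw]

/-- **NE conversion between a multi-type MFG and its lifted MFG.** With
`J_avg(π̃;π) := (1/W)·Σ_w J^w(π̃;π)` (the return in the lifted mean-field game of the
corresponding constrained policies): (1) an ε-approximate constrained Nash equilibrium of the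
lifted MFG is a `W·ε`-approximate Nash equilibrium of the multi-type MFG; and (2) conversely,
an ε-approximate Nash equilibrium of the multi-type MFG is an ε-approximate constrained Nash
equilibrium of the lifted MFG. -/
theorem mt_mfg_NE_conversion {W : ℕ} (hW : 0 < W) {S A : Fin W → Type*}
    [∀ w, Fintype (S w)] [∀ w, Fintype (A w)] (H : ℕ)
    (P : ∀ w, ℕ → S w → A w → (∀ w', S w' → ℝ) → S w → ℝ)
    (r : ∀ w, ℕ → S w → A w → (∀ w', S w' → ℝ) → ℝ)
    (μ₁ : ∀ w, S w → ℝ) (hμ₁ : ∀ w, μ₁ w ∈ stdSimplex ℝ (S w))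
    (hP : IsKernelMT H P)
    (hr : ∀ w h, h < H → ∀ s a (μ : ∀ w', S w' → ℝ),
      (∀ w', μ w' ∈ stdSimplex ℝ (S w')) → r w h s a μ ∈ Set.Icc (0 : ℝ) (1 / (H : ℝ)))
    (Javg : (∀ w, ℕ → S w → A w → ℝ) → (∀ w, ℕ → S w → A w → ℝ) → ℝ)
    (hJavg : ∀ πt π, Javg πt π = (1 / (W : ℝ)) * ∑ w, JMT H P r μ₁ πt π w)
    (ε : ℝ) (piHat : ∀ w, ℕ → S w → A w → ℝ) (hpiHat : IsPolicyMT piHat) :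
    -- (1) constrained NE of the lifted MFG ⇒ NE of the multi-type MFG
    ((∀ π : ∀ w, ℕ → S w → A w → ℝ, IsPolicyMT π →
        Javg π piHat ≤ Javg piHat piHat + ε) →
      ∀ w, ∀ πt : ∀ w', ℕ → S w' → A w' → ℝ, IsPolicyMT πt →
        JMT H P r μ₁ πt piHat w ≤ JMT H P r μ₁ piHat piHat w + W * ε) ∧
    -- (2) NE of the multi-type MFG ⇒ constrained NE of the lifted MFG
    ((∀ w, ∀ πt : ∀ w', ℕ → S w' → A w' → ℝ, IsPolicyMT πt →
        JMT H P r μ₁ πt piHat w ≤ JMT H P r μ₁ piHat piHat w + ε) →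
      ∀ π : ∀ w, ℕ → S w → A w → ℝ, IsPolicyMT π →
        Javg π piHat ≤ Javg piHat piHat + ε) := by
  constructor
  · intro hNE w πt hπt
    classical
    set π' : ∀ w', ℕ → S w' → A w' → ℝ := Function.update piHat w (πt w) with hπ'
    have hπ'w : π' w = πt w := Function.update_self w (πt w) piHat
    have hπ'pol : IsPolicyMT π' := by
      intro w' h s
      by_cases hww : w' = w
      · subst hww; rw [hπ'w]; exact hπt w' h s
      · rw [hπ', Function.update_of_ne hww]; exact hpiHat w' h s
    have h1 := hNE π' hπ'pol
    rw [hJavg, hJavg] at h1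
    have hsum : ∀ w', w' ≠ w →
        JMT H P r μ₁ π' piHat w' = JMT H P r μ₁ piHat piHat w' := by
      intro w' hne
      exact JMT_congr H P r μ₁ π' piHat piHat w' (Function.update_of_ne hne _ _)
    have hJw : JMT H P r μ₁ π' piHat w = JMT H P r μ₁ πt piHat w :=
      JMT_congr H P r μ₁ π' πt piHat w hπ'w
    have hsplit : ∀ (f : Fin W → ℝ), ∑ w', f w' = f w + ∑ w' ∈ Finset.univ.erase w, f w' := by
      intro f
      rw [Finset.add_sum_erase _ f (Finset.mem_univ w)]
    have hrest : ∑ w' ∈ Finset.univ.erase w, JMT H P r μ₁ π' piHat w'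
        = ∑ w' ∈ Finset.univ.erase w, JMT H P r μ₁ piHat piHat w' :=
      Finset.sum_congr rfl fun w' hw' => hsum w' (Finset.ne_of_mem_erase hw')
    rw [hsplit (fun w' => JMT H P r μ₁ π' piHat w'),
        hsplit (fun w' => JMT H P r μ₁ piHat piHat w'), hrest, hJw] at h1
    have hWpos : (0:ℝ) < W := by exact_mod_cast hW
    have hW0 : (W:ℝ) ≠ 0 := ne_of_gt hWpos
    rw [div_mul_eq_mul_div, div_mul_eq_mul_div, one_mul, one_mul, div_le_iff₀ hWpos,
        add_mul, div_mul_cancel₀ _ hW0] at h1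
    nlinarith [h1]
  · intro hNE π hπ
    rw [hJavg, hJavg]
    have hWpos : (0:ℝ) < W := by exact_mod_cast hW
    have hsum : ∑ w, JMT H P r μ₁ π piHat w ≤ ∑ w, (JMT H P r μ₁ piHat piHat w + ε) :=
      Finset.sum_le_sum fun w _ => hNE w π hπ
    rw [Finset.sum_add_distrib, Finset.sum_const, Finset.card_univ, Fintype.card_fin] at hsum
    rw [div_mul_eq_mul_div, div_mul_eq_mul_div, one_mul, one_mul, div_add' _ _ _ (ne_of_gt hWpos)]
    apply div_le_div_of_nonneg_right ?_ hWpos.le |>.trans_eq rfl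
    calc ∑ w, JMT H P r μ₁ π piHat w ≤ ∑ w, JMT H P r μ₁ piHat piHat w + W • ε := hsum
      _ = ∑ w, JMT H P r μ₁ piHat piHat w + ε * W := by rw [nsmul_eq_mul]; ring
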